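/- arXiv:1305.3912 — 2 statements merged into one kernel-verified Lean document; each statement's English description precedes it below -/
import Mathlib

section
/- Under composition, S₋ is superadditive and S₊ is subadditive: for all X₁ ∈ Ω₁ and X₂ ∈ Ω₂, S₋¹(X₁) + S₋²(X₂) ≤ S₋¹²(c(X₁,X₂)) ≤ S₊¹²(c(X₁,X₂)) ≤ S₊¹(X₁) + S₊²(X₂). (Proposition 1 (f).) -/
def lowerSet {Ω : Type*} (prec : Ω → Ω → Prop) (E : Set Ω) (S : Ω → ℝ) (X : Ω) : Set ℝ :=
  {s | ∃ Z ∈ E, prec Z X ∧ S Z = s}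

def upperSet {Ω : Type*} (prec : Ω → Ω → Prop) (E : Set Ω) (S : Ω → ℝ) (X : Ω) : Set ℝ :=
  {s | ∃ Z ∈ E, prec X Z ∧ S Z = s}

noncomputable def Sminus {Ω : Type*} (prec : Ω → Ω → Prop) (E : Set Ω) (S : Ω → ℝ) (X : Ω) : ℝ :=
  sSup (lowerSet prec E S X)

noncomputable def Splus {Ω : Type*} (prec : Ω → Ω → Prop) (E : Set Ω) (S : Ω → ℝ) (X : Ω) : ℝ :=
  sInf (upperSet prec E S X)

/-!
The attaining equilibrium states A' ≺₁ X₁ ≺₁ A'' and B' ≺₂ X₂ ≺₂ B'' compose, by consistency, to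
equilibrium states c(A', B') ≺₁₂ c(X₁, X₂) ≺₁₂ c(A'', B''), whose entropies are, by additivity,
S₋¹(X₁) + S₋²(X₂) and S₊¹(X₁) + S₊²(X₂). So the first sum lies in the set whose supremum is
S₋¹²(c(X₁, X₂)) and the second in the set whose infimum is S₊¹²(c(X₁, X₂)). Transitivity and
monotonicity in the composite system put every element of the lower set below every element of the
upper set, which makes both sets bounded and gives the middle inequality.
-/

section LowerUpper

variable {Ω : Type*} {prec : Ω → Ω → Prop} {E : Set Ω} {S : Ω → ℝ} {X : Ω}

theorem mem_lowerSet {Z : Ω} (hZ : Z ∈ E) (hZX : prec Z X) : S Z ∈ lowerSet prec E S X :=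
  ⟨Z, hZ, hZX, rfl⟩

theorem mem_upperSet {Z : Ω} (hZ : Z ∈ E) (hXZ : prec X Z) : S Z ∈ upperSet prec E S X :=
  ⟨Z, hZ, hXZ, rfl⟩

variable (trans : ∀ x y z, prec x y → prec y z → prec x z)
  (mono : ∀ x ∈ E, ∀ y ∈ E, prec x y → S x ≤ S y)
include trans mono

theorem le_of_mem_lowerSet_of_mem_upperSet {s t : ℝ} (hs : s ∈ lowerSet prec E S X)
    (ht : t ∈ upperSet prec E S X) : s ≤ t := by
  obtain ⟨Z, hZ, hZX, rfl⟩ := hs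
  obtain ⟨W, hW, hXW, rfl⟩ := ht
  exact mono Z hZ W hW (trans Z X W hZX hXW)

theorem Sminus_le_Splus (hl : (lowerSet prec E S X).Nonempty)
    (hu : (upperSet prec E S X).Nonempty) : Sminus prec E S X ≤ Splus prec E S X :=
  csSup_le hl fun _ hs => le_csInf hu fun _ ht =>
    le_of_mem_lowerSet_of_mem_upperSet trans mono hs ht

theorem le_Sminus {s : ℝ} (hs : s ∈ lowerSet prec E S X) (hu : (upperSet prec E S X).Nonempty) :
    s ≤ Sminus prec E S X :=
  let ⟨_, ht⟩ := hu
  le_csSup ⟨_, fun _ hs' => le_of_mem_lowerSet_of_mem_upperSet trans mono hs' ht⟩ hs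

theorem Splus_le {t : ℝ} (ht : t ∈ upperSet prec E S X) (hl : (lowerSet prec E S X).Nonempty) :
    Splus prec E S X ≤ t :=
  let ⟨_, hs⟩ := hl
  csInf_le ⟨_, fun _ ht' => le_of_mem_lowerSet_of_mem_upperSet trans mono hs ht'⟩ ht

end LowerUpper

theorem stmt_4_general {Ω₁ Ω₂ Ω₁₂ : Type*}
    (prec₁ : Ω₁ → Ω₁ → Prop) (E₁ : Set Ω₁) (S₁ : Ω₁ → ℝ)
    (prec₂ : Ω₂ → Ω₂ → Prop) (E₂ : Set Ω₂) (S₂ : Ω₂ → ℝ)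
    (prec₁₂ : Ω₁₂ → Ω₁₂ → Prop) (E₁₂ : Set Ω₁₂) (S₁₂ : Ω₁₂ → ℝ)
    (c : Ω₁ → Ω₂ → Ω₁₂)
    (TRANS12 : ∀ x y z : Ω₁₂, prec₁₂ x y → prec₁₂ y z → prec₁₂ x z)
    (MONO12 : ∀ x ∈ E₁₂, ∀ y ∈ E₁₂, prec₁₂ x y → S₁₂ x ≤ S₁₂ y)
    (COMPEQ : ∀ Z₁ ∈ E₁, ∀ Z₂ ∈ E₂, c Z₁ Z₂ ∈ E₁₂)
    (CONSISTENCY : ∀ (X X' : Ω₁) (Y Y' : Ω₂),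
      prec₁ X X' → prec₂ Y Y' → prec₁₂ (c X Y) (c X' Y'))
    (ADDITIVITY : ∀ Z₁ ∈ E₁, ∀ Z₂ ∈ E₂, S₁₂ (c Z₁ Z₂) = S₁ Z₁ + S₂ Z₂)
    (ATT1 : ∀ X : Ω₁, ∃ X' ∈ E₁, ∃ X'' ∈ E₁, prec₁ X' X ∧ prec₁ X X'' ∧
      S₁ X' = Sminus prec₁ E₁ S₁ X ∧ S₁ X'' = Splus prec₁ E₁ S₁ X)
    (ATT2 : ∀ X : Ω₂, ∃ X' ∈ E₂, ∃ X'' ∈ E₂, prec₂ X' X ∧ prec₂ X X'' ∧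
      S₂ X' = Sminus prec₂ E₂ S₂ X ∧ S₂ X'' = Splus prec₂ E₂ S₂ X) :
    ∀ (X₁ : Ω₁) (X₂ : Ω₂),
      Sminus prec₁ E₁ S₁ X₁ + Sminus prec₂ E₂ S₂ X₂ ≤ Sminus prec₁₂ E₁₂ S₁₂ (c X₁ X₂) ∧
      Sminus prec₁₂ E₁₂ S₁₂ (c X₁ X₂) ≤ Splus prec₁₂ E₁₂ S₁₂ (c X₁ X₂) ∧
      Splus prec₁₂ E₁₂ S₁₂ (c X₁ X₂) ≤ Splus prec₁ E₁ S₁ X₁ + Splus prec₂ E₂ S₂ X₂ := by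
  intro X₁ X₂
  obtain ⟨A', hA', A'', hA'', hA'X, hXA'', hSA', hSA''⟩ := ATT1 X₁
  obtain ⟨B', hB', B'', hB'', hB'X, hXB'', hSB', hSB''⟩ := ATT2 X₂
  have hlow : Sminus prec₁ E₁ S₁ X₁ + Sminus prec₂ E₂ S₂ X₂ ∈
      lowerSet prec₁₂ E₁₂ S₁₂ (c X₁ X₂) := by
    rw [← hSA', ← hSB', ← ADDITIVITY A' hA' B' hB']
    exact mem_lowerSet (COMPEQ A' hA' B' hB') (CONSISTENCY _ _ _ _ hA'X hB'X)
  have hup : Splus prec₁ E₁ S₁ X₁ + Splus prec₂ E₂ S₂ X₂ ∈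
      upperSet prec₁₂ E₁₂ S₁₂ (c X₁ X₂) := by
    rw [← hSA'', ← hSB'', ← ADDITIVITY A'' hA'' B'' hB'']
    exact mem_upperSet (COMPEQ A'' hA'' B'' hB'') (CONSISTENCY _ _ _ _ hXA'' hXB'')
  exact ⟨le_Sminus TRANS12 MONO12 hlow ⟨_, hup⟩,
    Sminus_le_Splus TRANS12 MONO12 ⟨_, hlow⟩ ⟨_, hup⟩,
    Splus_le TRANS12 MONO12 hup ⟨_, hlow⟩⟩

/-- Proposition 1 (f): S₋ is superadditive and S₊ is subadditive
under composition of two systems. -/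
theorem stmt_4 {Ω₁ Ω₂ Ω₁₂ : Type*}
    (prec₁ : Ω₁ → Ω₁ → Prop) (E₁ : Set Ω₁) (S₁ : Ω₁ → ℝ)
    (prec₂ : Ω₂ → Ω₂ → Prop) (E₂ : Set Ω₂) (S₂ : Ω₂ → ℝ)
    (prec₁₂ : Ω₁₂ → Ω₁₂ → Prop) (E₁₂ : Set Ω₁₂) (S₁₂ : Ω₁₂ → ℝ)
    (c : Ω₁ → Ω₂ → Ω₁₂)
    (TRANS1 : ∀ x y z : Ω₁, prec₁ x y → prec₁ y z → prec₁ x z)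
    (TRANS2 : ∀ x y z : Ω₂, prec₂ x y → prec₂ y z → prec₂ x z)
    (TRANS12 : ∀ x y z : Ω₁₂, prec₁₂ x y → prec₁₂ y z → prec₁₂ x z)
    (MONO1 : ∀ x ∈ E₁, ∀ y ∈ E₁, prec₁ x y → S₁ x ≤ S₁ y)
    (MONO2 : ∀ x ∈ E₂, ∀ y ∈ E₂, prec₂ x y → S₂ x ≤ S₂ y)
    (MONO12 : ∀ x ∈ E₁₂, ∀ y ∈ E₁₂, prec₁₂ x y → S₁₂ x ≤ S₁₂ y)
    (N2₁ : ∀ X : Ω₁, ∃ X' ∈ E₁, ∃ X'' ∈ E₁, prec₁ X' X ∧ prec₁ X X'')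
    (N2₂ : ∀ X : Ω₂, ∃ X' ∈ E₂, ∃ X'' ∈ E₂, prec₂ X' X ∧ prec₂ X X'')
    (N2₁₂ : ∀ X : Ω₁₂, ∃ X' ∈ E₁₂, ∃ X'' ∈ E₁₂, prec₁₂ X' X ∧ prec₁₂ X X'')
    (COMPEQ : ∀ Z₁ ∈ E₁, ∀ Z₂ ∈ E₂, c Z₁ Z₂ ∈ E₁₂)
    (CONSISTENCY : ∀ (X X' : Ω₁) (Y Y' : Ω₂),
      prec₁ X X' → prec₂ Y Y' → prec₁₂ (c X Y) (c X' Y'))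
    (ADDITIVITY : ∀ Z₁ ∈ E₁, ∀ Z₂ ∈ E₂, S₁₂ (c Z₁ Z₂) = S₁ Z₁ + S₂ Z₂)
    (ATT1 : ∀ X : Ω₁, ∃ X' ∈ E₁, ∃ X'' ∈ E₁, prec₁ X' X ∧ prec₁ X X'' ∧
      S₁ X' = Sminus prec₁ E₁ S₁ X ∧ S₁ X'' = Splus prec₁ E₁ S₁ X)
    (ATT2 : ∀ X : Ω₂, ∃ X' ∈ E₂, ∃ X'' ∈ E₂, prec₂ X' X ∧ prec₂ X X'' ∧
      S₂ X' = Sminus prec₂ E₂ S₂ X ∧ S₂ X'' = Splus prec₂ E₂ S₂ X) :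
    ∀ (X₁ : Ω₁) (X₂ : Ω₂),
      Sminus prec₁ E₁ S₁ X₁ + Sminus prec₂ E₂ S₂ X₂ ≤ Sminus prec₁₂ E₁₂ S₁₂ (c X₁ X₂) ∧
      Sminus prec₁₂ E₁₂ S₁₂ (c X₁ X₂) ≤ Splus prec₁₂ E₁₂ S₁₂ (c X₁ X₂) ∧
      Splus prec₁₂ E₁₂ S₁₂ (c X₁ X₂) ≤ Splus prec₁ E₁ S₁ X₁ + Splus prec₂ E₂ S₂ X₂ :=
  stmt_4_general prec₁ E₁ S₁ prec₂ E₂ S₂ prec₁₂ E₁₂ S₁₂ c TRANS12 MONO12 COMPEQ CONSISTENCY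
    ADDITIVITY ATT1 ATT2
end

section
/- There exists a unique function Ŝ : Ω → ℝ that coincides with S on E and is monotone with respect to ≺ (i.e. X ≺ Y implies Ŝ(X) ≤ Ŝ(Y)) if and only if S₋(X) = S₊(X) for all X ∈ Ω. (Theorem 4, equivalence of (i) and (ii).) -/
/-!
Every monotone extension `T` of `S` is squeezed between `S₋` and `S₊`: an equilibrium state
`Z ≺ X` gives `S Z = T Z ≤ T X`, and dually. Conversely `S₋` and `S₊` are themselves monotone
extensions (on `E` both equal `S` by reflexivity and `MONO`). Hence a monotone extension is unique
iff `S₋ = S₊`, and then every extension is pinned between two equal functions.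
-/

def IsMonotoneExtension {Ω : Type*} (prec : Ω → Ω → Prop) (E : Set Ω) (S T : Ω → ℝ) : Prop :=
  (∀ Z ∈ E, T Z = S Z) ∧ ∀ X Y, prec X Y → T X ≤ T Y

section

variable {Ω : Type*} {prec : Ω → Ω → Prop} {E : Set Ω} {S : Ω → ℝ}

theorem lowerSet_nonempty (hN2 : ∀ X, ∃ X' ∈ E, ∃ X'' ∈ E, prec X' X ∧ prec X X'') (X : Ω) :
    (lowerSet prec E S X).Nonempty := by
  obtain ⟨X', hX', -, -, hX'X, -⟩ := hN2 X
  exact ⟨S X', X', hX', hX'X, rfl⟩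

theorem upperSet_nonempty (hN2 : ∀ X, ∃ X' ∈ E, ∃ X'' ∈ E, prec X' X ∧ prec X X'') (X : Ω) :
    (upperSet prec E S X).Nonempty := by
  obtain ⟨-, -, X'', hX'', -, hXX''⟩ := hN2 X
  exact ⟨S X'', X'', hX'', hXX'', rfl⟩

theorem bddAbove_lowerSet (htrans : ∀ x y z, prec x y → prec y z → prec x z)
    (hmono : ∀ x ∈ E, ∀ y ∈ E, prec x y → S x ≤ S y)
    (hN2 : ∀ X, ∃ X' ∈ E, ∃ X'' ∈ E, prec X' X ∧ prec X X'') (X : Ω) :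
    BddAbove (lowerSet prec E S X) := by
  obtain ⟨-, -, X'', hX'', -, hXX''⟩ := hN2 X
  refine ⟨S X'', ?_⟩
  rintro _ ⟨Z, hZ, hZX, rfl⟩
  exact hmono Z hZ X'' hX'' (htrans Z X X'' hZX hXX'')

theorem bddBelow_upperSet (htrans : ∀ x y z, prec x y → prec y z → prec x z)
    (hmono : ∀ x ∈ E, ∀ y ∈ E, prec x y → S x ≤ S y)
    (hN2 : ∀ X, ∃ X' ∈ E, ∃ X'' ∈ E, prec X' X ∧ prec X X'') (X : Ω) :
    BddBelow (upperSet prec E S X) := by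
  obtain ⟨X', hX', -, -, hX'X, -⟩ := hN2 X
  refine ⟨S X', ?_⟩
  rintro _ ⟨Z, hZ, hXZ, rfl⟩
  exact hmono X' hX' Z hZ (htrans X' X Z hX'X hXZ)

theorem isGreatest_lowerSet_of_mem (hrefl : ∀ X, prec X X)
    (hmono : ∀ x ∈ E, ∀ y ∈ E, prec x y → S x ≤ S y) {Z : Ω} (hZ : Z ∈ E) :
    IsGreatest (lowerSet prec E S Z) (S Z) := by
  refine ⟨⟨Z, hZ, hrefl Z, rfl⟩, ?_⟩
  rintro _ ⟨W, hW, hWZ, rfl⟩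
  exact hmono W hW Z hZ hWZ

theorem isLeast_upperSet_of_mem (hrefl : ∀ X, prec X X)
    (hmono : ∀ x ∈ E, ∀ y ∈ E, prec x y → S x ≤ S y) {Z : Ω} (hZ : Z ∈ E) :
    IsLeast (upperSet prec E S Z) (S Z) := by
  refine ⟨⟨Z, hZ, hrefl Z, rfl⟩, ?_⟩
  rintro _ ⟨W, hW, hZW, rfl⟩
  exact hmono Z hZ W hW hZW

theorem isMonotoneExtension_Sminus (htrans : ∀ x y z, prec x y → prec y z → prec x z)
    (hmono : ∀ x ∈ E, ∀ y ∈ E, prec x y → S x ≤ S y)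
    (hN2 : ∀ X, ∃ X' ∈ E, ∃ X'' ∈ E, prec X' X ∧ prec X X'') (hrefl : ∀ X, prec X X) :
    IsMonotoneExtension prec E S (Sminus prec E S) := by
  refine ⟨fun Z hZ => (isGreatest_lowerSet_of_mem hrefl hmono hZ).csSup_eq, ?_⟩
  intro X Y hXY
  apply csSup_le_csSup (bddAbove_lowerSet htrans hmono hN2 Y) (lowerSet_nonempty hN2 X)
  rintro _ ⟨Z, hZ, hZX, rfl⟩
  exact ⟨Z, hZ, htrans Z X Y hZX hXY, rfl⟩

theorem isMonotoneExtension_Splus (htrans : ∀ x y z, prec x y → prec y z → prec x z)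
    (hmono : ∀ x ∈ E, ∀ y ∈ E, prec x y → S x ≤ S y)
    (hN2 : ∀ X, ∃ X' ∈ E, ∃ X'' ∈ E, prec X' X ∧ prec X X'') (hrefl : ∀ X, prec X X) :
    IsMonotoneExtension prec E S (Splus prec E S) := by
  refine ⟨fun Z hZ => (isLeast_upperSet_of_mem hrefl hmono hZ).csInf_eq, ?_⟩
  intro X Y hXY
  apply csInf_le_csInf (bddBelow_upperSet htrans hmono hN2 X) (upperSet_nonempty hN2 Y)
  rintro _ ⟨Z, hZ, hYZ, rfl⟩
  exact ⟨Z, hZ, htrans X Y Z hXY hYZ, rfl⟩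

namespace IsMonotoneExtension

variable {T : Ω → ℝ}

theorem Sminus_le (hT : IsMonotoneExtension prec E S T)
    (hN2 : ∀ X, ∃ X' ∈ E, ∃ X'' ∈ E, prec X' X ∧ prec X X'') (X : Ω) :
    Sminus prec E S X ≤ T X := by
  apply csSup_le (lowerSet_nonempty hN2 X)
  rintro _ ⟨Z, hZ, hZX, rfl⟩
  exact hT.1 Z hZ ▸ hT.2 Z X hZX

theorem le_Splus (hT : IsMonotoneExtension prec E S T)
    (hN2 : ∀ X, ∃ X' ∈ E, ∃ X'' ∈ E, prec X' X ∧ prec X X'') (X : Ω) :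
    T X ≤ Splus prec E S X := by
  apply le_csInf (upperSet_nonempty hN2 X)
  rintro _ ⟨Z, hZ, hXZ, rfl⟩
  exact hT.1 Z hZ ▸ hT.2 X Z hXZ

end IsMonotoneExtension

end

theorem stmt_6_general {Ω : Type*} (prec : Ω → Ω → Prop) (E : Set Ω) (S : Ω → ℝ)
    (TRANS : ∀ x y z : Ω, prec x y → prec y z → prec x z)
    (MONO : ∀ x ∈ E, ∀ y ∈ E, prec x y → S x ≤ S y)
    (N2 : ∀ X : Ω, ∃ X' ∈ E, ∃ X'' ∈ E, prec X' X ∧ prec X X'')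
    (REFL : ∀ X : Ω, prec X X) :
    (∃! Shat : Ω → ℝ, (∀ Z ∈ E, Shat Z = S Z) ∧
        (∀ X Y : Ω, prec X Y → Shat X ≤ Shat Y)) ↔
      (∀ X : Ω, Sminus prec E S X = Splus prec E S X) := by
  have hminus := isMonotoneExtension_Sminus TRANS MONO N2 REFL
  have hplus := isMonotoneExtension_Splus TRANS MONO N2 REFL
  constructor
  · rintro ⟨T, -, huniq⟩ X
    rw [huniq _ hminus, huniq _ hplus]
  · intro h
    refine ⟨Sminus prec E S, hminus, fun T hT => funext fun X => ?_⟩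
    exact le_antisymm (h X ▸ IsMonotoneExtension.le_Splus hT N2 X)
      (IsMonotoneExtension.Sminus_le hT N2 X)

/-- Theorem 4, (i) ⟺ (ii): a unique monotone extension of S exists
iff S₋ = S₊ everywhere. -/
theorem stmt_6 {Ω : Type*} (prec : Ω → Ω → Prop) (E : Set Ω) (S : Ω → ℝ)
    (TRANS : ∀ x y z : Ω, prec x y → prec y z → prec x z)
    (MONO : ∀ x ∈ E, ∀ y ∈ E, prec x y → S x ≤ S y)
    (N2 : ∀ X : Ω, ∃ X' ∈ E, ∃ X'' ∈ E, prec X' X ∧ prec X X'')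
    (REFL : ∀ X : Ω, prec X X)
    (ATT : ∀ X : Ω, ∃ X' ∈ E, ∃ X'' ∈ E, prec X' X ∧ prec X X'' ∧
      S X' = Sminus prec E S X ∧ S X'' = Splus prec E S X) :
    (∃! Shat : Ω → ℝ, (∀ Z ∈ E, Shat Z = S Z) ∧
        (∀ X Y : Ω, prec X Y → Shat X ≤ Shat Y)) ↔
      (∀ X : Ω, Sminus prec E S X = Splus prec E S X) :=
  stmt_6_general prec E S TRANS MONO N2 REFL
end
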